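/- Fix a nonzero vector x ∈ R^d, an integer r ≥ 1, and ε ∈ (0,1). Let A be an r×d random matrix with independent N(0,1) entries. Then the probability that |‖Ax‖² / r − ‖x‖²| > ε·‖x‖² is at most 2·exp(−r·(ε²/4 − ε³/6)). -/

import Mathlib

/-!
Each row of `A` contributes an independent `⟨A_k, x⟩ ∼ N(0, ‖x‖²)`, so `Z = ‖Ax‖² / ‖x‖²`
has the χ² moment generating function `𝔼 exp (t Z) = (1 - 2t)^(-r/2)` for `t < 1/2`.
The exponential Markov inequality with `t = ε / (2(1 + ε))` for the upper tail and
`t = -ε / (2(1 - ε))` for the lower tail, together with `log (1 + ε) ≤ ε - ε²/2 + ε³/3`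
and `log (1 - ε) ≤ -ε - ε²/2`, bounds each tail by `exp (-r (ε²/4 - ε³/6))`.
-/

open MeasureTheory ProbabilityTheory

/-- The Euclidean norm of a vector in `ℝ^m`. -/
noncomputable def euclNorm {m : Type*} [Fintype m] (v : m → ℝ) : ℝ :=
  Real.sqrt (∑ i, v i ^ 2)

/-- The product of an `r × d` matrix with a vector in `ℝ^d`. -/
def matVec {r d : ℕ} (A : Fin r → Fin d → ℝ) (v : Fin d → ℝ) : Fin r → ℝ :=
  fun k => ∑ l, A k l * v l

open Real
open scoped ENNReal NNReal

lemma matVec_apply {r d : ℕ} (A : Fin r → Fin d → ℝ) (v : Fin d → ℝ) (k : Fin r) :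
    matVec A v k = A k ⬝ᵥ v :=
  rfl

lemma euclNorm_sq {m : Type*} [Fintype m] (v : m → ℝ) : euclNorm v ^ 2 = ∑ i, v i ^ 2 :=
  sq_sqrt (by positivity)

lemma sum_sq_pos_of_ne_zero {κ : Type*} [Fintype κ] {x : κ → ℝ} (hx : x ≠ 0) :
    0 < ∑ l, x l ^ 2 := by
  obtain ⟨i, hi⟩ := Function.ne_iff.1 hx
  exact Fintype.sum_pos (Pi.lt_def.2 ⟨fun l => sq_nonneg _, i, pow_two_pos_of_ne_zero hi⟩)

lemma le_div_or_div_le_of_lt_abs_div_sub {q r s ε : ℝ} (hs : 0 < s) (hr : 0 < r)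
    (h : ε * s < |q / r - s|) : r * (1 + ε) ≤ q / s ∨ q / s ≤ r * (1 - ε) := by
  rw [lt_abs, lt_sub_iff_add_lt, lt_neg, sub_lt_iff_lt_add, lt_div_iff₀ hr,
    div_lt_iff₀ hr] at h
  rw [le_div_iff₀ hs, div_le_iff₀ hs]
  rcases h with h | h
  · left; nlinarith
  · right; nlinarith

lemma log_one_add_le_cubic_taylor {x : ℝ} (hx : 0 ≤ x) :
    log (1 + x) ≤ x - x ^ 2 / 2 + x ^ 3 / 3 := by
  let F : ℝ → ℝ := fun y => y - y ^ 2 / 2 + y ^ 3 / 3 - log (1 + y)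
  have hF : ∀ y ∈ Set.Ici (0 : ℝ), HasDerivAt F (1 - y + y ^ 2 - (1 + y)⁻¹) y := by
    intro y hy
    have h1 : (1 : ℝ) + y ≠ 0 := by linarith [hy.out]
    refine HasDerivAt.congr_deriv
      ((((hasDerivAt_id' y).sub ((hasDerivAt_pow 2 y).div_const 2)).add
        ((hasDerivAt_pow 3 y).div_const 3)).sub (((hasDerivAt_id' y).const_add 1).log h1)) ?_
    simp only [Nat.cast_ofNat]
    ring
  suffices MonotoneOn F (Set.Ici 0) by
    simpa [F] using this Set.self_mem_Ici hx hx
  refine monotoneOn_of_hasDerivWithinAt_nonneg (convex_Ici 0)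
    (fun y hy => (hF y hy).continuousAt.continuousWithinAt)
    (fun y hy => (hF y (interior_subset hy)).hasDerivWithinAt) fun y hy => ?_
  rw [interior_Ici, Set.mem_Ioi] at hy
  have : 1 - y + y ^ 2 - (1 + y)⁻¹ = y ^ 3 / (1 + y) := by field_simp; ring
  rw [this]
  positivity

lemma log_one_sub_le_quadratic_taylor {x : ℝ} (hx0 : 0 ≤ x) (hx1 : x < 1) :
    log (1 - x) ≤ -x - x ^ 2 / 2 := by
  have h := sum_le_hasSum (Finset.range 2) (fun n _ => by positivity)
    (hasSum_pow_div_log_of_abs_lt_one (abs_lt.2 ⟨by linarith, hx1⟩))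
  norm_num [Finset.sum_range_succ] at h
  linarith

lemma sqrt_pow_eq_exp {y : ℝ} (hy : 0 < y) (n : ℕ) : √y ^ n = exp (n * log y / 2) := by
  rw [← exp_log hy, ← exp_half, ← exp_nat_mul, log_exp, mul_div_assoc]

lemma measure_le_le_exp_neg_mul_lintegral_exp {Ω : Type*} [MeasurableSpace Ω] (μ : Measure Ω)
    {Z : Ω → ℝ} (hZ : Measurable Z) (a : ℝ) :
    μ {ω | a ≤ Z ω} ≤ ENNReal.ofReal (exp (-a)) * ∫⁻ ω, ENNReal.ofReal (exp (Z ω)) ∂μ := by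
  calc μ {ω | a ≤ Z ω}
      ≤ μ {ω | ENNReal.ofReal (exp a) ≤ ENNReal.ofReal (exp (Z ω))} :=
        measure_mono fun ω hω => ENNReal.ofReal_le_ofReal (exp_le_exp.2 hω)
    _ ≤ (∫⁻ ω, ENNReal.ofReal (exp (Z ω)) ∂μ) / ENNReal.ofReal (exp a) :=
        meas_ge_le_lintegral_div (by fun_prop) (by positivity) ENNReal.ofReal_ne_top
    _ = _ := by
        rw [ENNReal.div_eq_inv_mul, ← ENNReal.ofReal_inv_of_pos (exp_pos a), exp_neg]

section ChiSquared

variable {Ω : Type*} [MeasurableSpace Ω]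

/-- Stated with lower integrals, so that it carries no integrability side conditions. -/
def HasChiSquaredMGF (μ : Measure Ω) (Z : Ω → ℝ) (n : ℕ) : Prop :=
  ∀ t : ℝ, 2 * t < 1 →
    ∫⁻ ω, ENNReal.ofReal (exp (t * Z ω)) ∂μ = ENNReal.ofReal (√(1 - 2 * t))⁻¹ ^ n

namespace HasChiSquaredMGF

variable {μ : Measure Ω} {Z : Ω → ℝ} {n : ℕ}

lemma measure_le_mul_le (hZ : HasChiSquaredMGF μ Z n) (hZm : Measurable Z) {t : ℝ}
    (ht : 2 * t < 1) (a : ℝ) :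
    μ {ω | a ≤ t * Z ω} ≤ ENNReal.ofReal (exp (-a) * (√(1 - 2 * t))⁻¹ ^ n) := by
  rw [ENNReal.ofReal_mul (exp_pos _).le, ENNReal.ofReal_pow (by positivity), ← hZ t ht]
  exact measure_le_le_exp_neg_mul_lintegral_exp μ (by fun_prop) a

lemma measure_ge_le (hZ : HasChiSquaredMGF μ Z n) (hZm : Measurable Z) {ε : ℝ} (hε : 0 < ε) :
    μ {ω | n * (1 + ε) ≤ Z ω} ≤ ENNReal.ofReal (exp (-n * (ε ^ 2 / 4 - ε ^ 3 / 6))) := by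
  set t := ε / (2 * (1 + ε)) with ht_def
  have ht : 1 - 2 * t = (1 + ε)⁻¹ := by rw [ht_def]; field_simp; ring
  have ht1 : 2 * t < 1 := by linarith [inv_pos.2 (by linarith : 0 < 1 + ε)]
  have hsub : {ω | n * (1 + ε) ≤ Z ω} ⊆ {ω | n * ε / 2 ≤ t * Z ω} := fun ω hω => by
    have : t * (n * (1 + ε)) = n * ε / 2 := by rw [ht_def]; field_simp
    rw [Set.mem_ofPred, ← this]
    exact mul_le_mul_of_nonneg_left hω (by positivity)
  refine (measure_mono hsub).trans <| (hZ.measure_le_mul_le hZm ht1 _).trans <|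
    ENNReal.ofReal_le_ofReal ?_
  rw [ht, sqrt_inv, inv_inv, sqrt_pow_eq_exp (by positivity), ← exp_add, exp_le_exp]
  nlinarith [log_one_add_le_cubic_taylor hε.le, (Nat.cast_nonneg n : (0 : ℝ) ≤ n)]

lemma measure_le_le (hZ : HasChiSquaredMGF μ Z n) (hZm : Measurable Z) {ε : ℝ} (hε0 : 0 < ε)
    (hε1 : ε < 1) :
    μ {ω | Z ω ≤ n * (1 - ε)} ≤ ENNReal.ofReal (exp (-n * (ε ^ 2 / 4 - ε ^ 3 / 6))) := by
  have h1ε : 0 < 1 - ε := by linarith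
  set t := -(ε / (2 * (1 - ε))) with ht_def
  have ht : 1 - 2 * t = (1 - ε)⁻¹ := by rw [ht_def]; field_simp; ring
  have ht0 : t ≤ 0 := by rw [ht_def, neg_nonpos]; positivity
  have hsub : {ω | Z ω ≤ n * (1 - ε)} ⊆ {ω | -(n * ε / 2) ≤ t * Z ω} := fun ω hω => by
    have : t * (n * (1 - ε)) = -(n * ε / 2) := by rw [ht_def]; field_simp
    rw [Set.mem_ofPred, ← this]
    exact mul_le_mul_of_nonpos_left hω ht0
  refine (measure_mono hsub).trans <| (hZ.measure_le_mul_le hZm (by linarith) _).trans <|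
    ENNReal.ofReal_le_ofReal ?_
  rw [ht, sqrt_inv, inv_inv, sqrt_pow_eq_exp h1ε, ← exp_add, exp_le_exp, neg_neg]
  nlinarith [log_one_sub_le_quadratic_taylor hε0.le hε1, (Nat.cast_nonneg n : (0 : ℝ) ≤ n),
    pow_pos hε0 3]

end HasChiSquaredMGF

end ChiSquared

section GaussianMatrix

variable {ι κ : Type*} [Fintype ι] [Fintype κ]

lemma map_dotProduct_pi_gaussianReal (x : κ → ℝ) :
    (Measure.pi fun _ : κ => gaussianReal 0 1).map (· ⬝ᵥ x) =
      gaussianReal 0 (∑ l, x l ^ 2).toNNReal := by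
  set L : StrongDual ℝ (EuclideanSpace ℝ κ) := innerSL ℝ (WithLp.toLp 2 x)
  have hL : (· ⬝ᵥ x) = L ∘ WithLp.toLp 2 := by
    ext a
    simp [L, dotProduct, PiLp.inner_apply, mul_comm]
  rw [hL, ← Measure.map_map (by fun_prop) (by fun_prop), map_pi_eq_stdGaussian,
    IsGaussian.map_eq_gaussianReal, integral_strongDual_stdGaussian, variance_dual_stdGaussian,
    innerSL_apply_norm, EuclideanSpace.real_norm_sq_eq]

lemma lintegral_exp_mul_sq_gaussianReal {v : ℝ≥0} {t : ℝ} (h : 2 * t * v < 1) :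
    ∫⁻ y, ENNReal.ofReal (exp (t * y ^ 2)) ∂gaussianReal 0 v =
      ENNReal.ofReal (√(1 - 2 * t * v))⁻¹ := by
  rcases eq_or_ne v 0 with rfl | hv
  · simp [lintegral_dirac]
  have hv' : (0 : ℝ) < v := by positivity
  set b : ℝ := (1 - 2 * t * v) / (2 * v) with hb_def
  have hb : 0 < b := by positivity
  have hdensity : ∀ y, gaussianPDF 0 v y * ENNReal.ofReal (exp (t * y ^ 2)) =
      ENNReal.ofReal ((√(2 * π * v))⁻¹ * exp (-b * y ^ 2)) := by
    intro y
    rw [gaussianPDF, gaussianPDFReal, ← ENNReal.ofReal_mul (by positivity), mul_assoc,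
      ← exp_add, hb_def]
    congr 3
    field_simp
    ring
  rw [gaussianReal_of_var_ne_zero 0 hv,
    lintegral_withDensity_eq_lintegral_mul _ (measurable_gaussianPDF 0 v) (by fun_prop)]
  simp only [Pi.mul_apply, hdensity]
  rw [← ofReal_integral_eq_lintegral_ofReal ((integrable_exp_neg_mul_sq hb).const_mul _)
      (.of_forall fun y => by positivity), integral_const_mul, integral_gaussian]
  congr 1
  have : π / b = 2 * π * v / (1 - 2 * t * v) := by rw [hb_def]; field_simp
  rw [this, sqrt_div' _ (by linarith), ← div_eq_inv_mul, div_div_cancel_left' (by positivity)]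

lemma lintegral_exp_mul_sum_sq_dotProduct (x : κ → ℝ) {t : ℝ} (h : 2 * t * ∑ l, x l ^ 2 < 1) :
    ∫⁻ A : ι → κ → ℝ, ENNReal.ofReal (exp (t * ∑ k, (A k ⬝ᵥ x) ^ 2))
        ∂(Measure.pi fun _ => Measure.pi fun _ => gaussianReal 0 1) =
      ENNReal.ofReal (√(1 - 2 * t * ∑ l, x l ^ 2))⁻¹ ^ Fintype.card ι := by
  set f : (κ → ℝ) → ℝ≥0∞ := fun a => ENNReal.ofReal (exp (t * (a ⬝ᵥ x) ^ 2))
  have hf : Measurable f := by fun_prop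
  have hrow : ∫⁻ a, f a ∂(Measure.pi fun _ => gaussianReal 0 1) =
      ENNReal.ofReal (√(1 - 2 * t * ∑ l, x l ^ 2))⁻¹ := by
    have hvar : ((∑ l, x l ^ 2).toNNReal : ℝ) = ∑ l, x l ^ 2 := coe_toNNReal _ (by positivity)
    rw [← lintegral_map (f := fun y => ENNReal.ofReal (exp (t * y ^ 2))) (by fun_prop)
      (by fun_prop), map_dotProduct_pi_gaussianReal,
      lintegral_exp_mul_sq_gaussianReal (by rwa [hvar]), hvar]
  have hprod : ∀ A : ι → κ → ℝ,
      ENNReal.ofReal (exp (t * ∑ k, (A k ⬝ᵥ x) ^ 2)) = ∏ k, f (A k) := by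
    intro A
    rw [Finset.mul_sum, exp_sum, ENNReal.ofReal_prod_of_nonneg fun _ _ => (exp_pos _).le]
  simp_rw [hprod]
  rw [lintegral_prod_eq_prod_lintegral_of_indepFun _ (fun k (A : ι → κ → ℝ) => f (A k))
    (iIndepFun_pi fun _ => hf.aemeasurable) fun k => hf.comp (measurable_pi_apply k)]
  simp_rw [(measurePreserving_eval (fun _ : ι => Measure.pi fun _ : κ => gaussianReal 0 1)
    _).lintegral_comp hf, hrow, Finset.prod_const, Finset.card_univ]

lemma hasChiSquaredMGF_sum_sq_dotProduct_div {x : κ → ℝ} (hx : x ≠ 0) :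
    HasChiSquaredMGF (Measure.pi fun _ : ι => Measure.pi fun _ : κ => gaussianReal 0 1)
      (fun A => (∑ k, (A k ⬝ᵥ x) ^ 2) / ∑ l, x l ^ 2) (Fintype.card ι) := by
  intro t ht
  have hs := sum_sq_pos_of_ne_zero hx
  have h := lintegral_exp_mul_sum_sq_dotProduct (ι := ι) x (t := t / ∑ l, x l ^ 2)
    (by field_simp; exact ht)
  simp_rw [div_mul_eq_mul_div] at h
  simp_rw [mul_div_assoc', h]
  field_simp

end GaussianMatrix

/-- Single-vector norm concentration for Gaussian random projections: for a
fixed nonzero `x ∈ ℝ^d`, `r ≥ 1`, `ε ∈ (0,1)`, and an `r × d` random matrix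
`A` with independent standard Gaussian `N(0,1)` entries, the probability that
`|‖Ax‖²/r − ‖x‖²| > ε·‖x‖²` is at most `2·exp(−r·(ε²/4 − ε³/6))`. -/
theorem gaussian_projection_norm_concentration
    (d r : ℕ) (hr : 1 ≤ r) (x : Fin d → ℝ) (hx : x ≠ 0)
    (ε : ℝ) (hε0 : 0 < ε) (hε1 : ε < 1) :
    (Measure.pi fun _ : Fin r => Measure.pi fun _ : Fin d => gaussianReal 0 1)
      {A : Fin r → Fin d → ℝ |
        |euclNorm (matVec A x) ^ 2 / (r : ℝ) - euclNorm x ^ 2| >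
          ε * euclNorm x ^ 2} ≤
      ENNReal.ofReal (2 * Real.exp (-(r : ℝ) * (ε ^ 2 / 4 - ε ^ 3 / 6))) := by
  have hr0 : (0 : ℝ) < r := by exact_mod_cast hr
  have hs : 0 < euclNorm x ^ 2 := by rw [euclNorm_sq]; exact sum_sq_pos_of_ne_zero hx
  set Z := fun A : Fin r → Fin d → ℝ => euclNorm (matVec A x) ^ 2 / euclNorm x ^ 2
  have hZ :
      HasChiSquaredMGF (Measure.pi fun _ => Measure.pi fun _ => gaussianReal 0 1) Z r := by
    simpa only [Z, euclNorm_sq, matVec_apply, Fintype.card_fin] using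
      hasChiSquaredMGF_sum_sq_dotProduct_div (ι := Fin r) hx
  have hZm : Measurable Z := by simp only [Z, euclNorm_sq, matVec_apply]; fun_prop
  have hsub : {A : Fin r → Fin d → ℝ |
        |euclNorm (matVec A x) ^ 2 / (r : ℝ) - euclNorm x ^ 2| > ε * euclNorm x ^ 2} ⊆
      {A | r * (1 + ε) ≤ Z A} ∪ {A | Z A ≤ r * (1 - ε)} :=
    fun A hA => le_div_or_div_le_of_lt_abs_div_sub hs hr0 hA
  calc _ ≤ _ := measure_mono hsub
    _ ≤ _ := measure_union_le _ _
    _ ≤ _ := add_le_add (hZ.measure_ge_le hZm hε0) (hZ.measure_le_le hZm hε0 hε1)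
    _ = _ := by rw [← ENNReal.ofReal_add (by positivity) (by positivity), two_mul]
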